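/- Let f = (P,Q) : ℂ² → ℂ² be a polynomial map with non-zero constant Jacobian J(P,Q) ≡ const ≠ 0, in affine coordinates (x,y) in which P and Q are monic in y. Let φ be a Newton-Puiseux type of P. If φ is not a dicritical series of f, then deg p_φ(ξ) = 1, q_φ(ξ) ≡ const ≠ 0, and b_φ > 0. -/

import Mathlib

open Filter Topology

noncomputable section

/-! ### Basic notions: polynomial maps of `ℂ²` and their Jacobian -/

/-- Evaluation of a polynomial in two variables at a point of `ℂ × ℂ`. -/
def pev (P : MvPolynomial (Fin 2) ℂ) (p : ℂ × ℂ) : ℂ :=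
  MvPolynomial.eval (fun i : Fin 2 => if i = 0 then p.1 else p.2) P

/-- The Jacobian polynomial `J(P,Q) = P_x Q_y - P_y Q_x`. -/
def jac (P Q : MvPolynomial (Fin 2) ℂ) : MvPolynomial (Fin 2) ℂ :=
  MvPolynomial.pderiv 0 P * MvPolynomial.pderiv 1 Q -
    MvPolynomial.pderiv 1 P * MvPolynomial.pderiv 0 Q

/-- The polynomial map `ℂ² → ℂ²` with components `P`, `Q`. -/
def polyMap (P Q : MvPolynomial (Fin 2) ℂ) : ℂ × ℂ → ℂ × ℂ :=
  fun p => (pev P p, pev Q p)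

/-! ### Exceptional value sets -/

/-- `h` restricts to a locally trivial fibration over the complement of `E`. -/
def IsLocallyTrivialOff {X Y : Type} [TopologicalSpace X] [TopologicalSpace Y]
    (h : X → Y) (E : Set Y) : Prop :=
  ∀ y ∉ E, ∃ U : Set Y, IsOpen U ∧ y ∈ U ∧ U ⊆ Eᶜ ∧
    ∃ (F : Type) (_ : TopologicalSpace F) (φ : (h ⁻¹' U) ≃ₜ U × F),
      ∀ x : h ⁻¹' U, ((φ x).1 : Y) = h x

/-- `E` is the exceptional value set of `h`: the smallest subset of the target
off which `h` is a locally trivial fibration. -/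
def IsExceptionalValueSet {X Y : Type} [TopologicalSpace X] [TopologicalSpace Y]
    (h : X → Y) (E : Set Y) : Prop :=
  IsLocallyTrivialOff h E ∧ ∀ E', IsLocallyTrivialOff h E' → E ⊆ E'

/-! ### Local branches and tangency to vertical lines -/

/-- The line `u = u₀` is tangent to some irreducible local branch of the curve `C`:
there is an injective analytic arc `γ` inside `C` through a point with first
coordinate `u₀`, whose tangent direction is vertical, i.e. the vanishing order of the
second component is smaller than that of the first component. -/
def TangentToVerticalBranch (C : Set (ℂ × ℂ)) (u₀ : ℂ) : Prop :=
  ∃ γ : ℂ → ℂ × ℂ,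
    γ 0 ∈ C ∧ (γ 0).1 = u₀ ∧ (∀ᶠ t in 𝓝 (0 : ℂ), γ t ∈ C) ∧
    (∃ V ∈ 𝓝 (0 : ℂ), Set.InjOn γ V) ∧
    ∃ (h₁ : AnalyticAt ℂ (fun t => (γ t).1 - u₀) 0)
      (h₂ : AnalyticAt ℂ (fun t => (γ t).2 - (γ 0).2) 0),
      analyticOrderAt (fun t => (γ t).2 - (γ 0).2) 0 < analyticOrderAt (fun t => (γ t).1 - u₀) 0

/-! ### Finite fractional series with parameter -/

/-- A finite fractional series with parameter,
`φ(x,ξ) = Σ_{k=1}^{K-1} a_k x^{n_k/m} + ξ x^{n_K/m}`, with `0 ≠ a_k ∈ ℂ`,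
`n_1 > n_2 > ⋯ > n_K`, `m ∈ ℕ`, and `gcd{n_k} = 1`. Indices are `0,…,K-1`;
the coefficient of the last term is the parameter `ξ` (the entries `a k` for
`k = K-1` are irrelevant). -/
structure FracSeries where
  K : ℕ
  m : ℕ
  hK : 0 < K
  hm : 0 < m
  n : Fin K → ℤ
  a : Fin K → ℂ
  hn : StrictAnti n
  ha : ∀ k : Fin K, k.val + 1 < K → a k ≠ 0
  hgcd : (Finset.univ : Finset (Fin K)).gcd (fun k => (n k).natAbs) = 1

/-- `ord(φ) = n_K`, the last (smallest) exponent numerator. -/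
def FracSeries.ordK (φ : FracSeries) : ℤ := φ.n ⟨φ.K - 1, Nat.sub_lt φ.hK Nat.one_pos⟩

/-- The value of the fractional series after the substitution `x = t^{-m}`,
so that `x^{n_k/m} = t^{-n_k}`:  `φ.val t ξ = Σ_{k<K-1} a_k t^{-n_k} + ξ t^{-n_K}`. -/
def FracSeries.val (φ : FracSeries) (t ξ : ℂ) : ℂ :=
  (∑ k ∈ Finset.univ.filter (fun k : Fin φ.K => k.val + 1 < φ.K),
      φ.a k * t ^ (-(φ.n k))) + ξ * t ^ (-(φ.ordK))

/-! ### Dicritical series and Newton-Puiseux types -/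

/-- `φ` is a dicritical series of `f`:
`f(x, φ(x,ξ)) = f_φ(ξ) + lower order terms in x`, where `f_φ : ℂ → ℂ²` is a polynomial
map with `deg f_φ > 0`.  In the variable `t` (with `x = t^{-mult(φ)}`), "lower order
terms in `x`" are positive powers of `t`, i.e. `f(t^{-m}, φ(t^{-m},ξ)) → f_φ(ξ)` as `t → 0`. -/
def IsDicriticalSeries (f : ℂ × ℂ → ℂ × ℂ) (φ : FracSeries) (fφ : ℂ → ℂ × ℂ) : Prop :=
  (∃ p q : Polynomial ℂ, (∀ ξ, fφ ξ = (p.eval ξ, q.eval ξ)) ∧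
      (0 < p.natDegree ∨ 0 < q.natDegree)) ∧
  ∀ ξ : ℂ, Filter.Tendsto (fun t : ℂ => f (t ^ (-(φ.m : ℤ)), φ.val t ξ))
    (𝓝[≠] (0 : ℂ)) (𝓝 (fφ ξ))

/-- `φ` is a Newton-Puiseux type of `h` with associated polynomial `h_φ`:
`h(x, φ(x,ξ)) = h_φ(ξ) + lower order terms in x`, with `deg h_φ > 0`. -/
def IsNewtonPuiseuxType (h : MvPolynomial (Fin 2) ℂ) (φ : FracSeries)
    (hφ : Polynomial ℂ) : Prop :=
  0 < hφ.natDegree ∧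
  ∀ ξ : ℂ, Filter.Tendsto (fun t : ℂ => pev h (t ^ (-(φ.m : ℤ)), φ.val t ξ))
    (𝓝[≠] (0 : ℂ)) (𝓝 (hφ.eval ξ))

/-! ### Non-proper value set -/

/-- The non-proper value set `A_f` of `f : ℂ² → ℂ²`: values `a` for which some sequence
`p_i → ∞` has `f(p_i) → a`. -/
def NonProperValueSet (f : ℂ × ℂ → ℂ × ℂ) : Set (ℂ × ℂ) :=
  {a | ∃ p : ℕ → ℂ × ℂ, Filter.Tendsto (fun i => ‖p i‖) Filter.atTop Filter.atTop ∧
    Filter.Tendsto (fun i => f (p i)) Filter.atTop (𝓝 a)}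

/-! ### Monic-in-`y` and primitive polynomials -/

/-- `h` is monic in `y` with `deg_y h = deg h`. -/
def MonicInY (h : MvPolynomial (Fin 2) ℂ) : Prop :=
  MvPolynomial.degreeOf 1 h = h.totalDegree ∧
  MvPolynomial.coeff (Finsupp.single 1 h.totalDegree) h = 1

/-- `h` is a primitive polynomial: it is not a nontrivial one-variable polynomial
composed with another polynomial. -/
def PrimitivePoly (h : MvPolynomial (Fin 2) ℂ) : Prop :=
  ∀ (u : Polynomial ℂ) (g : MvPolynomial (Fin 2) ℂ), h = Polynomial.aeval g u →
    u.natDegree ≤ 1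

/-! ### Polynomial automorphisms and special curves -/

/-- `g : ℂ² → ℂ²` is a polynomial map. -/
def IsPolyMap2 (g : ℂ × ℂ → ℂ × ℂ) : Prop :=
  ∃ A B : MvPolynomial (Fin 2) ℂ, ∀ p, g p = (pev A p, pev B p)

/-- `g` is a polynomial automorphism of `ℂ²` (an algebraic change of coordinates). -/
def IsPolyAutomorphism (g : ℂ × ℂ → ℂ × ℂ) : Prop :=
  IsPolyMap2 g ∧ ∃ g' : ℂ × ℂ → ℂ × ℂ, IsPolyMap2 g' ∧
    Function.LeftInverse g' g ∧ Function.RightInverse g' g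

/-- `C` is a curve composed of the images of finitely many polynomial maps of the
form `t ↦ (t^k, q(t))`, `k ∈ ℕ` (`k ≥ 1`), `q ∈ ℂ[t]`. -/
def IsSpecialCurve (C : Set (ℂ × ℂ)) : Prop :=
  ∃ S : Finset (ℕ × Polynomial ℂ), S.Nonempty ∧ (∀ s ∈ S, 0 < s.1) ∧
    C = ⋃ s ∈ S, Set.range (fun t : ℂ => (t ^ s.1, s.2.eval t))

/-- `C` is an algebraic curve in `ℂ²`: the zero set of a nonconstant polynomial. -/
def IsAlgebraicCurve (C : Set (ℂ × ℂ)) : Prop :=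
  ∃ R : MvPolynomial (Fin 2) ℂ, 0 < R.totalDegree ∧ C = {p : ℂ × ℂ | pev R p = 0}

/-!
Along the curve `x = t^{-m}`, `y = φ(t, ξ)`, the polynomials `P` and `t^b Q` are Laurent
polynomials in `t` with coefficients in `ℂ[ξ]`; their limits at `t = 0` force them to be
polynomials `S(t, ξ)`, `S'(t, ξ)` with `S(0, ξ) = p_φ(ξ)` and `S'(0, ξ) = q_φ(ξ)`. Here `b > 0`,
since otherwise `f(x, φ)` itself converges to a non-constant polynomial map and `φ` would be
dicritical. The chain rule and `J ≡ c` give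
`t S_t S'_ξ - t S_ξ S'_t + b S_ξ S' = c t^{b+1} x_t y_ξ`, and the right side does not depend on
`ξ` because `x` does not and `y` is affine in `ξ`. Letting `t → 0`, `b p_φ'(ξ) q_φ(ξ)` is
independent of `ξ`, so `p_φ' q_φ` is constant and non-zero: `deg p_φ = 1` and `q_φ` is constant.
-/

open Polynomial Polynomial.Bivariate

namespace Polynomial.Bivariate

variable {𝕜 : Type*} [NontriviallyNormedField 𝕜]

def derivativeX (p : 𝕜[X][Y]) : 𝕜[X][Y] := swap (derivative (swap p))

theorem evalEval_swap (x y : 𝕜) (p : 𝕜[X][Y]) : (swap p).evalEval x y = p.evalEval y x := by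
  simpa only [coe_aevalAeval_eq_evalEval] using aevalAeval_swap x y p

theorem continuous_evalEval_right (p : 𝕜[X][Y]) (x : 𝕜) : Continuous fun y => p.evalEval x y := by
  simpa only [map_evalRingHom_eval] using (p.map (evalRingHom x)).continuous

theorem hasDerivAt_evalEval_right (p : 𝕜[X][Y]) (x y : 𝕜) :
    HasDerivAt (fun y => p.evalEval x y) ((derivative p).evalEval x y) y := by
  simpa only [map_evalRingHom_eval, derivative_map] using (p.map (evalRingHom x)).hasDerivAt y

theorem hasDerivAt_evalEval_left (p : 𝕜[X][Y]) (x y : 𝕜) :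
    HasDerivAt (fun x => p.evalEval x y) ((derivativeX p).evalEval x y) x := by
  simpa only [derivativeX, evalEval_swap] using hasDerivAt_evalEval_right (swap p) y x

theorem evalEval_zero_right (p : 𝕜[X][Y]) (x : 𝕜) : p.evalEval x 0 = (p.coeff 0).eval x := by
  simp [evalEval, coeff_zero_eq_eval_zero]

theorem evalEval_derivativeX_zero_right (p : 𝕜[X][Y]) (x : 𝕜) :
    (derivativeX p).evalEval x 0 = (derivative (p.coeff 0)).eval x := by
  refine (hasDerivAt_evalEval_left p x 0).unique ?_
  simpa only [evalEval_zero_right] using (p.coeff 0).hasDerivAt x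

/-- `t ^ (b + 1)` times the Jacobian determinant, in the variables `(t, ξ) = (Y, X)`, of the
functions `S` and `t ^ (-b) * S'`. -/
def rescaledJacobian (S S' : 𝕜[X][Y]) (b : ℕ) : 𝕜[X][Y] :=
  Y * derivative S * derivativeX S' - Y * derivativeX S * derivative S' +
    (b : 𝕜[X][Y]) * derivativeX S * S'

theorem evalEval_rescaledJacobian_zero_right (S S' : 𝕜[X][Y]) (b : ℕ) (x : 𝕜) :
    (rescaledJacobian S S' b).evalEval x 0 =
      b * (derivative (S.coeff 0)).eval x * (S'.coeff 0).eval x := by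
  simp only [rescaledJacobian, evalEval_add, evalEval_sub, evalEval_mul, evalEval_X,
    evalEval_natCast, zero_mul, sub_self, zero_add]
  rw [evalEval_derivativeX_zero_right, evalEval_zero_right]

end Polynomial.Bivariate

section Extraction

variable {𝕜 : Type*} [NontriviallyNormedField 𝕜]

theorem Polynomial.exists_eq_X_pow_mul_of_tendsto {p : 𝕜[X]} {M : ℕ} {l : 𝕜}
    (h : Tendsto (fun t => (t ^ M)⁻¹ * p.eval t) (𝓝[≠] 0) (𝓝 l)) :
    ∃ q : 𝕜[X], p = X ^ M * q ∧ q.eval 0 = l := by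
  induction M generalizing l with
  | zero =>
    refine ⟨p, by simp, tendsto_nhds_unique ?_ (by simpa using h)⟩
    exact p.continuous.continuousAt.tendsto.mono_left nhdsWithin_le_nhds
  | succ M ih =>
    have h0 : Tendsto (fun t => (t ^ M)⁻¹ * p.eval t) (𝓝[≠] 0) (𝓝 0) := by
      have := (tendsto_id.mono_left nhdsWithin_le_nhds).mul h
      rw [zero_mul] at this
      refine this.congr' ?_
      filter_upwards [self_mem_nhdsWithin] with t (ht : t ≠ 0)
      simp only [id]
      field_simp
      ring
    obtain ⟨q, rfl, hq⟩ := ih h0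
    obtain ⟨r, rfl⟩ : X ∣ q := X_dvd_iff.2 (by rwa [coeff_zero_eq_eval_zero])
    refine ⟨r, by ring, tendsto_nhds_unique ?_ h⟩
    refine (r.continuous.continuousAt.tendsto.mono_left nhdsWithin_le_nhds).congr' ?_
    filter_upwards [self_mem_nhdsWithin] with t (ht : t ≠ 0)
    simp only [eval_mul, eval_pow, eval_X]
    field_simp
    ring

theorem Polynomial.Bivariate.exists_eq_Y_pow_mul_of_tendsto {S : 𝕜[X][Y]} {M : ℕ} {l : 𝕜[X]}
    (h : ∀ x, Tendsto (fun y => (y ^ M)⁻¹ * S.evalEval x y) (𝓝[≠] 0) (𝓝 (l.eval x))) :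
    ∃ T : 𝕜[X][Y], S = Y ^ M * T ∧ T.coeff 0 = l := by
  have hcoeff : ∀ x, (∀ k < M, (S.coeff k).eval x = 0) ∧ (S.coeff M).eval x = l.eval x := by
    intro x
    obtain ⟨q, hq, hq0⟩ := exists_eq_X_pow_mul_of_tendsto (p := S.map (evalRingHom x))
      (by simpa only [map_evalRingHom_eval] using h x)
    refine ⟨fun k hk => ?_, ?_⟩
    · simpa [coeff_X_pow_mul', hk.not_ge] using congrArg (coeff · k) hq
    · simpa [coeff_X_pow_mul', coeff_zero_eq_eval_zero, hq0] using congrArg (coeff · M) hq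
  obtain ⟨T, rfl⟩ : Y ^ M ∣ S := X_pow_dvd_iff.2 fun k hk =>
    Polynomial.funext fun x => by simpa using (hcoeff x).1 k hk
  refine ⟨T, rfl, Polynomial.funext fun x => ?_⟩
  simpa [coeff_X_pow_mul'] using (hcoeff x).2

end Extraction

section LaurentPolyFun

variable {K : Type*} [Field K]

def IsLaurentPolyFun (u : K → K → K) : Prop :=
  ∃ (M : ℕ) (R : K[X][Y]), ∀ t ≠ 0, ∀ ξ, u t ξ = (t ^ M)⁻¹ * R.evalEval ξ t

theorem isLaurentPolyFun_const (a : K) : IsLaurentPolyFun fun _ _ => a :=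
  ⟨0, C (C a), by simp⟩

theorem isLaurentPolyFun_snd : IsLaurentPolyFun fun (_ ξ : K) => ξ :=
  ⟨0, C X, fun _ _ _ => by simp [evalEval_C]⟩

theorem isLaurentPolyFun_zpow (n : ℤ) : IsLaurentPolyFun fun (t _ : K) => t ^ n := by
  refine ⟨(-n).toNat, Y ^ n.toNat, fun t ht _ => ?_⟩
  calc t ^ n = t ^ ((n.toNat : ℤ) - ((-n).toNat : ℤ)) := by rw [Int.toNat_sub_toNat_neg]
    _ = _ := by
      rw [zpow_sub₀ ht, zpow_natCast, zpow_natCast, div_eq_inv_mul]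
      simp

theorem IsLaurentPolyFun.add {u v : K → K → K} (hu : IsLaurentPolyFun u)
    (hv : IsLaurentPolyFun v) : IsLaurentPolyFun fun t ξ => u t ξ + v t ξ := by
  obtain ⟨M, R, hR⟩ := hu
  obtain ⟨N, S, hS⟩ := hv
  refine ⟨M + N, Y ^ N * R + Y ^ M * S, fun t ht ξ => ?_⟩
  simp only [hR t ht, hS t ht, evalEval_add, evalEval_mul, evalEval_pow, evalEval_X]
  field_simp
  ring

theorem IsLaurentPolyFun.mul {u v : K → K → K} (hu : IsLaurentPolyFun u)
    (hv : IsLaurentPolyFun v) : IsLaurentPolyFun fun t ξ => u t ξ * v t ξ := by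
  obtain ⟨M, R, hR⟩ := hu
  obtain ⟨N, S, hS⟩ := hv
  refine ⟨M + N, R * S, fun t ht ξ => ?_⟩
  simp only [hR t ht, hS t ht, evalEval_mul, pow_add, mul_inv]
  ring

theorem isLaurentPolyFun_sum {ι : Type*} (s : Finset ι) {u : ι → K → K → K}
    (hu : ∀ i ∈ s, IsLaurentPolyFun (u i)) : IsLaurentPolyFun fun t ξ => ∑ i ∈ s, u i t ξ := by
  classical
  induction s using Finset.induction_on with
  | empty => simpa using isLaurentPolyFun_const (0 : K)
  | insert i s hi ih =>
    simp only [Finset.sum_insert hi]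
    exact (hu i (s.mem_insert_self i)).add (ih fun j hj => hu j (Finset.mem_insert_of_mem hj))

theorem isLaurentPolyFun_pev (P : MvPolynomial (Fin 2) ℂ) {x y : ℂ → ℂ → ℂ}
    (hx : IsLaurentPolyFun x) (hy : IsLaurentPolyFun y) :
    IsLaurentPolyFun fun t ξ => pev P (x t ξ, y t ξ) := by
  induction P using MvPolynomial.induction_on with
  | C a => simpa [pev] using isLaurentPolyFun_const a
  | add p q hp hq => simpa [pev] using hp.add hq
  | mul_X p i hp =>
    fin_cases i
    · simpa [pev] using hp.mul hx
    · simpa [pev] using hp.mul hy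

theorem FracSeries.isLaurentPolyFun_val (φ : FracSeries) : IsLaurentPolyFun φ.val :=
  (isLaurentPolyFun_sum _ fun k _ => (isLaurentPolyFun_const (φ.a k)).mul
    (isLaurentPolyFun_zpow _)).add (isLaurentPolyFun_snd.mul (isLaurentPolyFun_zpow _))

theorem IsLaurentPolyFun.exists_eq_evalEval_of_tendsto {𝕜 : Type*} [NontriviallyNormedField 𝕜]
    {u : 𝕜 → 𝕜 → 𝕜} (hu : IsLaurentPolyFun u) {b : ℕ} {l : 𝕜[X]}
    (h : ∀ ξ, Tendsto (fun t => t ^ b * u t ξ) (𝓝[≠] 0) (𝓝 (l.eval ξ))) :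
    ∃ S : 𝕜[X][Y], S.coeff 0 = l ∧ ∀ t ≠ 0, ∀ ξ, t ^ b * u t ξ = S.evalEval ξ t := by
  obtain ⟨M, R, hR⟩ := hu
  have hbR : ∀ t ≠ 0, ∀ ξ, t ^ b * u t ξ = (t ^ M)⁻¹ * (Y ^ b * R).evalEval ξ t := by
    intro t ht ξ
    simp only [hR t ht, evalEval_mul, evalEval_pow, evalEval_X]
    ring
  obtain ⟨S, hRS, hS⟩ := exists_eq_Y_pow_mul_of_tendsto (S := Y ^ b * R) (M := M) fun ξ =>
    (h ξ).congr' <| eventually_nhdsWithin_of_forall fun t ht => hbR t ht ξ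
  refine ⟨S, hS, fun t ht ξ => ?_⟩
  rw [hbR t ht, hRS]
  simp [ht]

end LaurentPolyFun

section ChainRule

open MvPolynomial (pderiv)

theorem hasDerivAt_pev (P : MvPolynomial (Fin 2) ℂ) {x y : ℂ → ℂ} {x' y' t : ℂ}
    (hx : HasDerivAt x x' t) (hy : HasDerivAt y y' t) :
    HasDerivAt (fun t => pev P (x t, y t))
      (pev (pderiv 0 P) (x t, y t) * x' + pev (pderiv 1 P) (x t, y t) * y') t := by
  induction P using MvPolynomial.induction_on with
  | C a => simpa [pev] using hasDerivAt_const t a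
  | add p q hp hq =>
    simp only [pev, map_add] at hp hq ⊢
    exact (hp.add hq).congr_deriv (by ring)
  | mul_X p i hp =>
    simp only [pev, map_mul, MvPolynomial.eval_X, MvPolynomial.pderiv_mul, map_add,
      MvPolynomial.pderiv_X] at hp ⊢
    fin_cases i
    · exact (hp.mul hx).congr_deriv (by simp; ring)
    · exact (hp.mul hy).congr_deriv (by simp; ring)

theorem pev_jac_mul (P Q : MvPolynomial (Fin 2) ℂ) (p : ℂ × ℂ) (a b c d : ℂ) :
    (pev (pderiv 0 P) p * a + pev (pderiv 1 P) p * b) *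
        (pev (pderiv 0 Q) p * c + pev (pderiv 1 Q) p * d) -
      (pev (pderiv 0 P) p * c + pev (pderiv 1 P) p * d) *
        (pev (pderiv 0 Q) p * a + pev (pderiv 1 Q) p * b) =
      pev (jac P Q) p * (a * d - c * b) := by
  simp only [jac, pev, map_sub, map_mul]
  ring

theorem evalEval_rescaledJacobian_eq {P Q : MvPolynomial (Fin 2) ℂ} {c : ℂ}
    (hJ : jac P Q = MvPolynomial.C c) {x : ℂ → ℂ} {y : ℂ → ℂ → ℂ} {S S' : ℂ[X][Y]} {b : ℕ}
    {t₀ ξ₀ x' yt yξ : ℂ}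
    (hS : ∀ᶠ t in 𝓝 t₀, ∀ ξ, pev P (x t, y t ξ) = S.evalEval ξ t)
    (hS' : ∀ᶠ t in 𝓝 t₀, ∀ ξ, t ^ b * pev Q (x t, y t ξ) = S'.evalEval ξ t)
    (hx : HasDerivAt x x' t₀) (hyt : HasDerivAt (y · ξ₀) yt t₀)
    (hyξ : HasDerivAt (y t₀) yξ ξ₀) :
    (rescaledJacobian S S' b).evalEval ξ₀ t₀ = t₀ ^ (b + 1) * (c * (x' * yξ)) := by
  have hx₀ : HasDerivAt (fun _ : ℂ => x t₀) 0 ξ₀ := hasDerivAt_const ξ₀ (x t₀)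
  have hSt := (hasDerivAt_evalEval_right S ξ₀ t₀).unique <|
    (hasDerivAt_pev P hx hyt).congr_of_eventuallyEq (hS.mono fun t h => (h ξ₀).symm)
  have hSξ := (hasDerivAt_evalEval_left S ξ₀ t₀).unique <| by
    simpa only [hS.self_of_nhds] using hasDerivAt_pev P hx₀ hyξ
  have hS't := (hasDerivAt_evalEval_right S' ξ₀ t₀).unique <|
    ((hasDerivAt_pow b t₀).mul (hasDerivAt_pev Q hx hyt)).congr_of_eventuallyEq
      (hS'.mono fun t h => (h ξ₀).symm)
  have hS'ξ := (hasDerivAt_evalEval_left S' ξ₀ t₀).unique <| by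
    simpa only [← hS'.self_of_nhds] using (hasDerivAt_pev Q hx₀ hyξ).const_mul (t₀ ^ b)
  have hjac := pev_jac_mul P Q (x t₀, y t₀ ξ₀) x' yt 0 yξ
  have hpow : (b : ℂ) * t₀ ^ (b - 1) * t₀ = b * t₀ ^ b := by
    cases b with
    | zero => simp
    | succ b => rw [Nat.add_sub_cancel, pow_succ]; ring
  rw [show pev (jac P Q) (x t₀, y t₀ ξ₀) = c by simp [hJ, pev]] at hjac
  simp only [rescaledJacobian, evalEval_add, evalEval_sub, evalEval_mul, evalEval_X,
    evalEval_natCast, hSt, hSξ, hS't, hS'ξ, ← hS'.self_of_nhds]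
  linear_combination t₀ ^ (b + 1) * hjac -
    pev (pderiv 1 P) (x t₀, y t₀ ξ₀) * yξ * pev Q (x t₀, y t₀ ξ₀) * hpow

end ChainRule

theorem Polynomial.natDegree_eq_one_of_derivative_mul_eq_C {K : Type*} [Field K] [CharZero K]
    {p q : K[X]} {a : K} (hp : 0 < p.natDegree) (hq : q ≠ 0) (h : derivative p * q = C a) :
    p.natDegree = 1 ∧ ∃ c₀ : K, c₀ ≠ 0 ∧ q = C c₀ := by
  have hdeg := congrArg natDegree h
  rw [natDegree_mul (derivative_ne_zero.2 hp.ne') hq, natDegree_derivative, natDegree_C] at hdeg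
  have hq0 : q = C (q.coeff 0) := eq_C_of_natDegree_eq_zero (by omega)
  refine ⟨by omega, q.coeff 0, fun h0 => hq ?_, hq0⟩
  rw [hq0, h0, map_zero]

namespace FracSeries

variable (φ : FracSeries)

theorem hasDerivAt_val (t ξ : ℂ) : HasDerivAt (φ.val t) (t ^ (-φ.ordK)) ξ := by
  unfold val
  exact (((hasDerivAt_id ξ).mul_const _).const_add _).congr_deriv (one_mul _)

theorem differentiableAt_val {t : ℂ} (ht : t ≠ 0) (ξ : ℂ) :
    DifferentiableAt ℂ (φ.val · ξ) t := by
  unfold val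
  fun_prop (disch := exact Or.inl ht)

theorem evalEval_rescaledJacobian_congr_left {P Q : MvPolynomial (Fin 2) ℂ} {c : ℂ}
    (hJ : jac P Q = MvPolynomial.C c) {S S' : ℂ[X][Y]} {b : ℕ}
    (hS : ∀ t ≠ 0, ∀ ξ, pev P (t ^ (-(φ.m : ℤ)), φ.val t ξ) = S.evalEval ξ t)
    (hS' : ∀ t ≠ 0, ∀ ξ, t ^ b * pev Q (t ^ (-(φ.m : ℤ)), φ.val t ξ) = S'.evalEval ξ t)
    {t : ℂ} (ht : t ≠ 0) (ξ ξ' : ℂ) :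
    (rescaledJacobian S S' b).evalEval ξ t = (rescaledJacobian S S' b).evalEval ξ' t := by
  have hW := fun ξ => evalEval_rescaledJacobian_eq hJ
    ((eventually_ne_nhds ht).mono fun s hs => hS s hs)
    ((eventually_ne_nhds ht).mono fun s hs => hS' s hs)
    (hasDerivAt_zpow _ t (Or.inl ht)) (φ.differentiableAt_val ht ξ).hasDerivAt
    (φ.hasDerivAt_val t ξ)
  rw [hW ξ, hW ξ']

end FracSeries

theorem pos_of_not_isDicriticalSeries {P Q : MvPolynomial (Fin 2) ℂ} {φ : FracSeries}
    {pφ : ℂ[X]} (hNP : IsNewtonPuiseuxType P φ pφ)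
    (hnd : ¬ ∃ fφ : ℂ → ℂ × ℂ, IsDicriticalSeries (polyMap P Q) φ fφ) {bφ : ℤ} {qφ : ℂ[X]}
    (hlead : ∀ ξ : ℂ, Tendsto (fun t : ℂ => t ^ bφ * pev Q (t ^ (-(φ.m : ℤ)), φ.val t ξ))
      (𝓝[≠] 0) (𝓝 (qφ.eval ξ))) :
    0 < bφ := by
  by_contra! hb
  obtain ⟨n, rfl⟩ : ∃ n : ℕ, bφ = -n := ⟨(-bφ).toNat, by omega⟩
  refine hnd ⟨fun ξ => (pφ.eval ξ, (C (0 ^ n) * qφ).eval ξ),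
    ⟨pφ, C (0 ^ n) * qφ, fun _ => rfl, Or.inl hNP.1⟩, fun ξ => (hNP.2 ξ).prodMk_nhds ?_⟩
  have hpow : Tendsto (fun t : ℂ => t ^ n) (𝓝[≠] 0) (𝓝 (0 ^ n)) :=
    tendsto_nhdsWithin_of_tendsto_nhds ((continuous_pow n).tendsto 0)
  have hQ : Tendsto (fun t => t ^ n * (t ^ (-(n : ℤ)) * pev Q (t ^ (-(φ.m : ℤ)), φ.val t ξ)))
      (𝓝[≠] 0) (𝓝 ((C (0 ^ n) * qφ).eval ξ)) := by
    simpa using hpow.mul (hlead ξ)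
  refine hQ.congr' ?_
  filter_upwards [self_mem_nhdsWithin] with t (ht : t ≠ 0)
  simp [ht]

/-- `Q(x,φ(x,ξ)) = q_φ(ξ) x^{b_φ/m} + …` is encoded, with `x = t^{-m}`, as
`t^{b_φ} Q(t^{-m}, φ) → q_φ(ξ)` as `t → 0`. -/
theorem statement5_general (P Q : MvPolynomial (Fin 2) ℂ) (c : ℂ)
    (hJ : jac P Q = MvPolynomial.C c)
    (φ : FracSeries) (pφ : Polynomial ℂ)
    (hNP : IsNewtonPuiseuxType P φ pφ)
    (hnd : ¬ ∃ fφ : ℂ → ℂ × ℂ, IsDicriticalSeries (polyMap P Q) φ fφ)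
    (bφ : ℤ) (qφ : Polynomial ℂ) (hqφ : qφ ≠ 0)
    (hlead : ∀ ξ : ℂ,
      Filter.Tendsto (fun t : ℂ => t ^ bφ * pev Q (t ^ (-(φ.m : ℤ)), φ.val t ξ))
        (𝓝[≠] (0 : ℂ)) (𝓝 (qφ.eval ξ))) :
    pφ.natDegree = 1 ∧ (∃ c₀ : ℂ, c₀ ≠ 0 ∧ qφ = Polynomial.C c₀) ∧ 0 < bφ := by
  have hb := pos_of_not_isDicriticalSeries hNP hnd hlead
  lift bφ to ℕ using hb.le
  have hx : IsLaurentPolyFun fun (t _ : ℂ) => t ^ (-(φ.m : ℤ)) := isLaurentPolyFun_zpow _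
  obtain ⟨S, hS0, hS⟩ := IsLaurentPolyFun.exists_eq_evalEval_of_tendsto
    (isLaurentPolyFun_pev P hx φ.isLaurentPolyFun_val) (b := 0) (by simpa using hNP.2)
  obtain ⟨S', hS'0, hS'⟩ := IsLaurentPolyFun.exists_eq_evalEval_of_tendsto
    (isLaurentPolyFun_pev Q hx φ.isLaurentPolyFun_val) (by simpa using hlead)
  have hlim : ∀ ξ, Tendsto (fun t => (rescaledJacobian S S' bφ).evalEval 0 t) (𝓝[≠] 0)
      (𝓝 (bφ * ((derivative pφ).eval ξ * qφ.eval ξ))) := fun ξ => by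
    rw [← mul_assoc, ← hS0, ← hS'0, ← evalEval_rescaledJacobian_zero_right]
    refine (tendsto_nhdsWithin_of_tendsto_nhds
      ((continuous_evalEval_right _ ξ).tendsto 0)).congr' ?_
    filter_upwards [self_mem_nhdsWithin] with t (ht : t ≠ 0)
    exact φ.evalEval_rescaledJacobian_congr_left hJ (fun t ht ξ => by simpa using hS t ht ξ)
      hS' ht ξ 0
  have hconst : derivative pφ * qφ = C ((derivative pφ * qφ).eval 0) :=
    Polynomial.funext fun ξ => by
      simpa [show bφ ≠ 0 by omega] using tendsto_nhds_unique (hlim ξ) (hlim 0)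
  obtain ⟨hdeg, hqconst⟩ := natDegree_eq_one_of_derivative_mul_eq_C hNP.1 hqφ hconst
  exact ⟨hdeg, hqconst, hb⟩

/-- **Lemma 6 (i).** If `φ` is a Newton-Puiseux type of `P` which is not a dicritical
series of `f`, then `deg p_φ = 1`, `q_φ ≡ const ≠ 0` and `b_φ > 0`.  Here
`Q(x,φ(x,ξ)) = q_φ(ξ) x^{b_φ/mult(φ)} + lower order terms in x`, which in the variable
`t` (`x = t^{-m}`) reads `t^{b_φ}·Q(t^{-m},φ) → q_φ(ξ)` as `t → 0`, with `q_φ ≠ 0`. -/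
theorem statement5 (P Q : MvPolynomial (Fin 2) ℂ) (c : ℂ) (hc : c ≠ 0)
    (hJ : jac P Q = MvPolynomial.C c)
    (hPm : MonicInY P) (hQm : MonicInY Q)
    (φ : FracSeries) (pφ : Polynomial ℂ)
    (hNP : IsNewtonPuiseuxType P φ pφ)
    (hnd : ¬ ∃ fφ : ℂ → ℂ × ℂ, IsDicriticalSeries (polyMap P Q) φ fφ)
    (bφ : ℤ) (qφ : Polynomial ℂ) (hqφ : qφ ≠ 0)
    (hlead : ∀ ξ : ℂ,
      Filter.Tendsto (fun t : ℂ => t ^ bφ * pev Q (t ^ (-(φ.m : ℤ)), φ.val t ξ))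
        (𝓝[≠] (0 : ℂ)) (𝓝 (qφ.eval ξ))) :
    pφ.natDegree = 1 ∧ (∃ c₀ : ℂ, c₀ ≠ 0 ∧ qφ = Polynomial.C c₀) ∧ 0 < bφ :=
  statement5_general P Q c hJ φ pφ hNP hnd bφ qφ hqφ hlead
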